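/- For an Artin algebra A, the Gorenstein stable category A-mod/A-Gproj (the quotient of A-mod by maps factoring through finitely generated Gorenstein-projective modules) is Karoubian, i.e., every idempotent morphism in it splits. -/

import Mathlib

open CategoryTheory CategoryTheory.Limits

def FGGorProj (A : Type) [Ring A] (M : ModuleCat.{0} A) : Prop :=
  Module.Finite A M ∧
  ∃ P : CochainComplex (ModuleCat.{0} A) ℤ,
    (∀ n : ℤ, Module.Finite A (P.X n) ∧ Projective (P.X n)) ∧
    (∀ n : ℤ, ∀ x : P.X n, P.d n (n + 1) x = 0 → ∃ y : P.X (n - 1), P.d (n - 1) n y = x) ∧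
    (∀ Q : ModuleCat.{0} A, Module.Finite A Q → Projective Q →
      ∀ n : ℤ, ∀ f : P.X n ⟶ Q, f.hom ∘ₗ (P.d (n - 1) n).hom = 0 →
        ∃ g : P.X (n + 1) ⟶ Q, g.hom ∘ₗ (P.d n (n + 1)).hom = f.hom) ∧
    Nonempty (M ≅ ModuleCat.of A (LinearMap.ker (P.d 0 1).hom))


/-- The category of finitely generated `A`-modules. -/
abbrev FGMod (A : Type) [Ring A] :=
  ObjectProperty.FullSubcategory (fun M : ModuleCat.{0} A => Module.Finite A M)

/-- Two maps are identified in the Gorenstein stable category when their difference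
factors through a finitely generated Gorenstein-projective module. -/
def stableRel (A : Type) [Ring A] : HomRel (FGMod A) :=
  fun {X Y} f g =>
    ∃ (G : ModuleCat.{0} A) (_ : FGGorProj A G) (u : X.obj ⟶ G) (v : G ⟶ Y.obj),
      (show X.obj ⟶ Y.obj from f.hom) = (show X.obj ⟶ Y.obj from g.hom) + u ≫ v

/-- The Gorenstein stable category `A-mod/A-Gproj`. -/
abbrev StMod (A : Type) [Ring A] := CategoryTheory.Quotient (stableRel A)

/-!
Idempotents lift modulo the ideal of maps factoring through Gorenstein-projectives. If
`f : X ⟶ X` is idempotent up to such a map, i.e. `f² - f = v ∘ u` with `u : X ⟶ G`, then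
`f` lives in the commutative subalgebra `R[f]` of `End_A X`, which is artinian because `X` has
finite length over `R`. In a commutative artinian ring every `g` is congruent modulo `g² - g` to
an idempotent: split off the idempotent `s` on which `g² - g` is a unit, and lift along the
nilpotent ideal on the complement. The resulting idempotent `e = f + d (f² - f)` differs from
`f` by a map through `G`, and it splits in `A-mod` through its image. Since Gorenstein-projectives
are closed under finite direct sums, the stable relation is a congruence, so this suffices.
-/

def Submodule.prodEquiv {R M N : Type*} [Semiring R] [AddCommMonoid M] [AddCommMonoid N]
    [Module R M] [Module R N] (p : Submodule R M) (q : Submodule R N) : p.prod q ≃ₗ[R] p × q where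
  toFun x := (⟨x.1.1, x.2.1⟩, ⟨x.1.2, x.2.2⟩)
  invFun x := ⟨(x.1.1, x.2.1), ⟨x.1.2, x.2.2⟩⟩
  map_add' _ _ := rfl
  map_smul' _ _ := rfl

namespace ModuleCat

variable {A : Type} [Ring A] {ι : Type*} {c : ComplexShape ι}

variable (A c) in
abbrev punitComplex : HomologicalComplex (ModuleCat.{0} A) c where
  X _ := ModuleCat.of A PUnit
  d _ _ := 0

abbrev prodComplex (P P' : HomologicalComplex (ModuleCat.{0} A) c) :
    HomologicalComplex (ModuleCat.{0} A) c where
  X n := ModuleCat.of A (P.X n × P'.X n)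
  d i j := ModuleCat.ofHom ((P.d i j).hom.prodMap (P'.d i j).hom)
  shape i j h := by ext <;> simp [P.shape i j h, P'.shape i j h]
  d_comp_d' i j k hij hjk := by ext <;> simp [← ModuleCat.comp_apply]

end ModuleCat

namespace FGGorProj

variable {A : Type} [Ring A]

theorem punit : FGGorProj A (ModuleCat.of A PUnit) := by
  refine ⟨inferInstance, ModuleCat.punitComplex A _, fun _ ↦ ⟨inferInstance, ?_⟩,
    fun _ _ _ ↦ ⟨0, Subsingleton.elim _ _⟩, fun _ _ _ _ f _ ↦ ⟨0, ?_⟩,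
    ⟨(LinearEquiv.ofSubsingleton _ _).toModuleIso⟩⟩
  · exact (IsProjective.iff_projective _).mp inferInstance
  · ext x
    simp [Subsingleton.elim x 0]

theorem prod {G G' : ModuleCat.{0} A} (hG : FGGorProj A G) (hG' : FGGorProj A G') :
    FGGorProj A (ModuleCat.of A (G × G')) := by
  obtain ⟨_, P, hproj, hexact, hlift, ⟨e⟩⟩ := hG
  obtain ⟨_, P', hproj', hexact', hlift', ⟨e'⟩⟩ := hG'
  refine ⟨inferInstance, ModuleCat.prodComplex P P', fun n ↦ ?_, fun n x hx ↦ ?_,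
    fun Q _ _ n f hf ↦ ?_, ⟨?_⟩⟩
  · obtain ⟨_, hP⟩ := hproj n
    obtain ⟨_, hP'⟩ := hproj' n
    have := (IsProjective.iff_projective _).mpr hP
    have := (IsProjective.iff_projective _).mpr hP'
    exact ⟨inferInstanceAs (Module.Finite A (P.X n × P'.X n)),
      (IsProjective.iff_projective _).mp inferInstance⟩
  · obtain ⟨y, hy⟩ := hexact n x.1 congr($hx.1)
    obtain ⟨y', hy'⟩ := hexact' n x.2 congr($hx.2)
    exact ⟨(y, y'), Prod.ext hy hy'⟩
  · obtain ⟨g, hg⟩ := hlift Q ‹_› ‹_› n (ModuleCat.ofHom (f.hom ∘ₗ .inl A _ _)) <| by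
      ext x; simpa using LinearMap.congr_fun hf (x, 0)
    obtain ⟨g', hg'⟩ := hlift' Q ‹_› ‹_› n (ModuleCat.ofHom (f.hom ∘ₗ .inr A _ _)) <| by
      ext x; simpa using LinearMap.congr_fun hf (0, x)
    refine ⟨ModuleCat.ofHom (g.hom.coprod g'.hom), ?_⟩
    ext x
    · simpa using LinearMap.congr_fun hg x
    · simpa using LinearMap.congr_fun hg' x
  · refine LinearEquiv.toModuleIso ?_
    exact (e.toLinearEquiv.prodCongr e'.toLinearEquiv).trans
      ((Submodule.prodEquiv _ _).symm.trans (.ofEq _ _ (LinearMap.ker_prodMap _ _).symm))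

end FGGorProj

instance stableRel.congruence (A : Type) [Ring A] : Congruence (stableRel A) where
  equivalence :=
    { refl _ := ⟨_, FGGorProj.punit, 0, 0, by simp⟩
      symm := fun ⟨G, hG, u, v, h⟩ ↦ ⟨G, hG, u, -v, by rw [h, Preadditive.comp_neg]; abel⟩
      trans := fun ⟨G, hG, u, v, h⟩ ⟨G', hG', u', v', h'⟩ ↦
        ⟨_, hG.prod hG', ModuleCat.ofHom (u.hom.prod u'.hom),
          ModuleCat.ofHom (v.hom.coprod v'.hom), by
            rw [h, h', add_assoc, add_comm (u' ≫ v')]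
            ext1
            simp [LinearMap.coprod_comp_prod]⟩ }
  comp_left w := fun ⟨G, hG, u, v, h⟩ ↦
    ⟨G, hG, w.hom ≫ u, v, by simp [h]⟩
  comp_right w := fun ⟨G, hG, u, v, h⟩ ↦
    ⟨G, hG, u, v ≫ w.hom, by simp [h]⟩

theorem exists_isIdempotentElem_sub_mem_span_of_isNilpotent {C : Type*} [CommRing C] {g : C}
    (hg : IsNilpotent (g * g - g)) :
    ∃ e : C, IsIdempotentElem e ∧ e - g ∈ Ideal.span {g * g - g} := by
  set I := Ideal.span {g * g - g}
  have hker : ∀ x ∈ RingHom.ker (Ideal.Quotient.mk I), IsNilpotent x := by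
    intro x hx
    rw [Ideal.mk_ker] at hx
    obtain ⟨c, rfl⟩ := Ideal.mem_span_singleton'.mp hx
    exact (Commute.all _ _).isNilpotent_mul_left hg
  have hg' : IsIdempotentElem (Ideal.Quotient.mk I g) := by
    rw [IsIdempotentElem, ← map_mul, Ideal.Quotient.eq]
    exact Ideal.mem_span_singleton_self _
  obtain ⟨e, he, hge⟩ := exists_isIdempotentElem_eq_of_ker_isNilpotent _ hker _ ⟨g, rfl⟩ hg'
  exact ⟨e, he, Ideal.Quotient.eq.mp hge⟩

namespace IsArtinianRing

theorem exists_isIdempotentElem_mem_span_isNilpotent_mul_one_sub {C : Type*} [CommRing C]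
    [IsArtinianRing C] (t : C) :
    ∃ s : C, IsIdempotentElem s ∧ s ∈ Ideal.span {t} ∧ IsNilpotent (t * (1 - s)) := by
  obtain ⟨n, c, hc⟩ := IsArtinian.exists_pow_succ_smul_dvd t (1 : C)
  simp only [smul_eq_mul, mul_one, Nat.succ_eq_add_one] at hc
  have hpow : ∀ k, t ^ n = t ^ (n + k) * c ^ k := by
    intro k
    induction k with
    | zero => simp
    | succ k ih => linear_combination ih + t ^ k * c ^ k * hc.symm
  obtain ⟨s, hs⟩ : ∃ s, s = t ^ (n + 1) * c ^ (n + 1) := ⟨_, rfl⟩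
  have hst : s * t ^ n = t ^ n := by
    rw [hs]; linear_combination (hpow (n + 1)).symm
  refine ⟨s, ?_, ?_, n + 1, ?_⟩
  · rw [IsIdempotentElem]
    linear_combination t * c ^ (n + 1) * hst + (s - 1) * hs
  · rw [hs]
    exact Ideal.mul_mem_right _ _ (Ideal.pow_mem_of_mem _ (Ideal.mem_span_singleton_self t) _
      n.succ_pos)
  · rw [mul_pow]
    linear_combination (-t * (1 - s) ^ n) * hst

theorem exists_isIdempotentElem_sub_mem_span {C : Type*} [CommRing C] [IsArtinianRing C]
    (g : C) : ∃ e : C, IsIdempotentElem e ∧ e - g ∈ Ideal.span {g * g - g} := by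
  obtain ⟨s, hs, hst, hnil⟩ := exists_isIdempotentElem_mem_span_isNilpotent_mul_one_sub (g * g - g)
  have hgs : g * (1 - s) * (g * (1 - s)) - g * (1 - s) = (g * g - g) * (1 - s) := by
    linear_combination g * g * hs.eq
  -- `g (1 - s)` is idempotent modulo a nilpotent, and `g s` already lies in `(g² - g)`.
  obtain ⟨e, he, heg⟩ := exists_isIdempotentElem_sub_mem_span_of_isNilpotent (hgs ▸ hnil)
  refine ⟨e, he, ?_⟩
  have hle : Ideal.span {(g * g - g) * (1 - s)} ≤ Ideal.span {g * g - g} :=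
    Ideal.span_singleton_le_span_singleton.mpr (dvd_mul_right _ _)
  have := Ideal.sub_mem _ (hle (hgs ▸ heg)) (Ideal.mul_mem_left _ g hst)
  rwa [show e - g * (1 - s) - g * s = e - g by ring] at this

end IsArtinianRing

theorem exists_isIdempotentElem_eq_add_mul (R : Type*) {S : Type*} [CommRing R] [Ring S]
    [Algebra R S] [IsArtinian R S] (g : S) :
    ∃ e d : S, IsIdempotentElem e ∧ e = g + d * (g * g - g) := by
  let C := Algebra.adjoin R {g}
  have : IsArtinian R C := inferInstanceAs (IsArtinian R (Subalgebra.toSubmodule C))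
  have : IsArtinianRing C := isArtinian_of_tower R this
  obtain ⟨e, he, heg⟩ := IsArtinianRing.exists_isIdempotentElem_sub_mem_span
    (⟨g, Algebra.self_mem_adjoin_singleton R g⟩ : C)
  obtain ⟨d, hd⟩ := Ideal.mem_span_singleton'.mp heg
  refine ⟨e, d, he.map C.val, eq_add_of_sub_eq' ?_⟩
  simpa using congr(C.val $hd).symm

theorem Module.End.isArtinian (R A M : Type*) [CommRing R] [Ring A] [Algebra R A]
    [AddCommGroup M] [Module A M] [Module R M] [IsScalarTower R A M] [Module.Finite A M]
    [IsArtinian R M] : IsArtinian R (Module.End A M) := by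
  obtain ⟨n, v, hv⟩ := Module.Finite.exists_fin (R := A) (M := M)
  let eval : Module.End A M →ₗ[R] Fin n → M :=
    { toFun φ i := φ (v i)
      map_add' _ _ := rfl
      map_smul' _ _ := rfl }
  exact isArtinian_of_injective eval fun φ ψ h ↦ LinearMap.ext_on_range hv (congrFun h)

theorem Module.End.exists_isIdempotentElem_eq_add_mul (R : Type*) {A M : Type*} [CommRing R]
    [IsArtinianRing R] [Ring A] [Algebra R A] [Module.Finite R A] [AddCommGroup M] [Module A M]
    [Module.Finite A M] (g : Module.End A M) :
    ∃ e d : Module.End A M, IsIdempotentElem e ∧ e = g + d * (g * g - g) := by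
  let _ : Module R M := Module.compHom M (algebraMap R A)
  have : IsScalarTower R A M := IsScalarTower.of_algebraMap_smul fun _ _ ↦ rfl
  have : Module.Finite R M := Module.Finite.trans A M
  have := Module.End.isArtinian R A M
  exact _root_.exists_isIdempotentElem_eq_add_mul R g

instance FGMod.isIdempotentComplete (A : Type) [Ring A] : IsIdempotentComplete (FGMod A) where
  idempotents_split X p hp := by
    have : Module.Finite A X.obj := X.property
    let Y : FGMod A := ⟨ModuleCat.of A (LinearMap.range p.hom.hom), Module.Finite.range _⟩
    refine ⟨Y, ObjectProperty.homMk (ModuleCat.ofHom (LinearMap.range p.hom.hom).subtype),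
      ObjectProperty.homMk (ModuleCat.ofHom p.hom.hom.rangeRestrict), ?_, rfl⟩
    ext ⟨_, x, rfl⟩
    exact congr($hp x)

theorem CategoryTheory.Quotient.isIdempotentComplete_of_lift {C : Type*} [Category* C]
    [IsIdempotentComplete C] (r : HomRel C)
    (h : ∀ (X : C) (p : (functor r).obj X ⟶ (functor r).obj X), p ≫ p = p →
      ∃ e : X ⟶ X, e ≫ e = e ∧ (functor r).map e = p) :
    IsIdempotentComplete (Quotient r) where
  idempotents_split := by
    rintro ⟨X⟩ p hp
    obtain ⟨e, he, rfl⟩ := h X p hp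
    obtain ⟨Y, i, q, hiq, hqi⟩ := IsIdempotentComplete.idempotents_split X e he
    exact ⟨_, (functor r).map i, (functor r).map q, by rw [← Functor.map_comp, hiq,
      Functor.map_id], by rw [← Functor.map_comp, hqi]⟩

theorem StMod.exists_idempotent_lift (R : Type) [CommRing R] [IsArtinianRing R] {A : Type}
    [Ring A] [Algebra R A] [Module.Finite R A] (X : FGMod A)
    (p : (Quotient.functor (stableRel A)).obj X ⟶ (Quotient.functor (stableRel A)).obj X)
    (hp : p ≫ p = p) :
    ∃ e : X ⟶ X, e ≫ e = e ∧ (Quotient.functor (stableRel A)).map e = p := by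
  obtain ⟨f, rfl⟩ := (Quotient.functor (stableRel A)).map_surjective p
  obtain ⟨G, hG, u, v, huv⟩ : stableRel A (f ≫ f) f :=
    (Quotient.functor_map_eq_iff _ _ _).mp (by rw [Functor.map_comp, hp])
  have : Module.Finite A X.obj := X.property
  obtain ⟨e, d, he, hed⟩ := Module.End.exists_isIdempotentElem_eq_add_mul R f.hom.hom
  have hf : f.hom.hom * f.hom.hom - f.hom.hom = v.hom ∘ₗ u.hom := by
    rw [sub_eq_iff_eq_add']
    exact congr(ModuleCat.Hom.hom $huv)
  refine ⟨ObjectProperty.homMk (ModuleCat.ofHom e), ?_,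
    (Quotient.functor_map_eq_iff _ _ _).mpr ⟨G, hG, u, v ≫ ModuleCat.ofHom d, ?_⟩⟩
  · ext x
    exact congr($he x)
  · ext x
    simp [hed, hf]

/-- For an Artin algebra `A`, the Gorenstein stable category
`A-mod/A-Gproj` is Karoubian: every idempotent splits. -/
theorem stable_category_idempotentComplete (R : Type) [CommRing R] [IsArtinianRing R]
    (A : Type) [Ring A] [Algebra R A] [Module.Finite R A] :
    IsIdempotentComplete (StMod A) :=
  Quotient.isIdempotentComplete_of_lift _ (StMod.exists_idempotent_lift R)
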